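/- With r_e(x) = -tanh(πx) - i/cosh(πx) and r_o(x) = -tanh(πx) + i/cosh(πx), the integrals (1/(2πi)) ∫_{-∞}^{∞} conj(r_e(x)) · r_e'(x) dx = -1/2 and (1/(2πi)) ∫_{-∞}^{∞} conj(r_o(x)) · r_o'(x) dx = 1/2. -/

import Mathlib

open Complex

/-- `r_e(x) = -tanh(πx) - i/cosh(πx)`. -/
noncomputable def rEven (x : ℝ) : ℂ :=
  -(Real.tanh (Real.pi * x) : ℂ) - Complex.I / (Real.cosh (Real.pi * x) : ℂ)

/-- `r_o(x) = -tanh(πx) + i/cosh(πx)`. -/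
noncomputable def rOdd (x : ℝ) : ℂ :=
  -(Real.tanh (Real.pi * x) : ℂ) + Complex.I / (Real.cosh (Real.pi * x) : ℂ)

/-!
Both paths are lifted through the Gudermannian function `gd u = arctan (sinh u)`, for which
`sin (gd u) = tanh u` and `cos (gd u) = sech u`: with `θ x = gd (π x) + π / 2` one has
`r_o = exp (iθ)` and `r_e = exp (-iθ)`. For any path `exp (iθ)` with real `θ`,
`conj r · r' = iθ'`, so each integral is `i` times the total change of the angle, and `θ`
increases from `0` to `π`. Integrability of `θ'` comes for free from its sign and the limits
of `θ`.
-/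

open MeasureTheory Filter Topology Set ComplexConjugate

theorem integrable_deriv_of_nonneg_of_tendsto {g g' : ℝ → ℝ} {l m : ℝ}
    (hderiv : ∀ x, HasDerivAt g (g' x) x) (hnonneg : ∀ x, 0 ≤ g' x)
    (hbot : Tendsto g atBot (𝓝 m)) (htop : Tendsto g atTop (𝓝 l)) : Integrable g' := by
  have hIoi : IntegrableOn g' (Ioi 0) :=
    integrableOn_Ioi_deriv_of_nonneg' (fun x _ => hderiv x) (fun x _ => hnonneg x) htop
  have hIic : IntegrableOn g' (Iic 0) := by
    have hrefl : IntegrableOn (g' ∘ Neg.neg) (Ioi (-1)) := by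
      refine integrableOn_Ioi_deriv_of_nonneg' (g := fun x => -g (-x)) (fun x _ => ?_)
        (fun x _ => hnonneg (-x)) (hbot.comp tendsto_neg_atTop_atBot).neg
      exact ((hderiv (-x)).comp x (hasDerivAt_neg x)).neg.congr_deriv (by simp)
    rw [← (Measure.measurePreserving_neg volume).integrableOn_comp_preimage
      (Homeomorph.neg ℝ).measurableEmbedding]
    exact hrefl.mono_set fun x (hx : -x ≤ 0) => show -1 < x by linarith
  simpa [← integrableOn_univ] using hIic.union hIoi

theorem conj_exp_mul_I_mul_deriv {θ : ℝ → ℝ} {θ' x : ℝ} (h : HasDerivAt θ θ' x) :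
    conj (exp (θ x * I)) * deriv (fun t => exp (θ t * I)) x = θ' * I := by
  have hderiv : HasDerivAt (fun t => exp (θ t * I)) (exp (θ x * I) * (θ' * I)) x :=
    (h.ofReal_comp.mul_const I).cexp
  rw [hderiv.deriv, ← mul_assoc, conj_mul', norm_exp_ofReal_mul_I]
  simp

theorem integral_conj_exp_mul_I_mul_deriv {θ θ' : ℝ → ℝ} {a b : ℝ}
    (hθ : ∀ x, HasDerivAt θ (θ' x) x) (hθ' : Integrable θ')
    (hbot : Tendsto θ atBot (𝓝 a)) (htop : Tendsto θ atTop (𝓝 b)) :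
    ∫ x, conj (exp (θ x * I)) * deriv (fun t => exp (θ t * I)) x = (b - a) * I := by
  simp_rw [conj_exp_mul_I_mul_deriv (hθ _)]
  rw [integral_mul_const, integral_complex_ofReal,
    integral_of_hasDerivAt_of_tendsto hθ hθ' hbot htop, ofReal_sub]

namespace Real

noncomputable def gudermannian (x : ℝ) : ℝ := arctan (sinh x)

theorem sqrt_one_add_sinh_sq (x : ℝ) : √(1 + sinh x ^ 2) = cosh x := by
  rw [← cosh_sq', sqrt_sq (cosh_pos x).le]

theorem sin_gudermannian (x : ℝ) : sin (gudermannian x) = tanh x := by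
  rw [gudermannian, sin_arctan, sqrt_one_add_sinh_sq, tanh_eq_sinh_div_cosh]

theorem cos_gudermannian (x : ℝ) : cos (gudermannian x) = (cosh x)⁻¹ := by
  rw [gudermannian, cos_arctan, sqrt_one_add_sinh_sq, one_div]

theorem hasDerivAt_gudermannian (x : ℝ) : HasDerivAt gudermannian (cosh x)⁻¹ x := by
  refine ((hasDerivAt_arctan _).comp x (hasDerivAt_sinh x)).congr_deriv ?_
  have := (cosh_pos x).ne'
  rw [← cosh_sq']
  field_simp

theorem tendsto_gudermannian_atTop : Tendsto gudermannian atTop (𝓝 (π / 2)) :=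
  (tendsto_arctan_atTop.mono_right nhdsWithin_le_nhds).comp sinhOrderIso.tendsto_atTop

theorem tendsto_gudermannian_atBot : Tendsto gudermannian atBot (𝓝 (-(π / 2))) :=
  (tendsto_arctan_atBot.mono_right nhdsWithin_le_nhds).comp sinhOrderIso.tendsto_atBot

end Real

open Real

noncomputable def rOddAngle (x : ℝ) : ℝ := gudermannian (π * x) + π / 2

theorem rOdd_eq_exp (x : ℝ) : rOdd x = exp (rOddAngle x * I) := by
  rw [rOdd, rOddAngle, exp_mul_I, ← ofReal_cos, ← ofReal_sin, Real.cos_add_pi_div_two,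
    Real.sin_add_pi_div_two, sin_gudermannian, cos_gudermannian]
  push_cast
  ring

theorem rEven_eq_exp (x : ℝ) : rEven x = exp (↑(-rOddAngle x) * I) := by
  rw [rEven, rOddAngle, exp_mul_I, ← ofReal_cos, ← ofReal_sin, Real.cos_neg, Real.sin_neg,
    Real.cos_add_pi_div_two, Real.sin_add_pi_div_two, sin_gudermannian, cos_gudermannian]
  push_cast
  ring

theorem hasDerivAt_rOddAngle (x : ℝ) : HasDerivAt rOddAngle (π * (Real.cosh (π * x))⁻¹) x :=
  (((hasDerivAt_gudermannian (π * x)).comp x ((hasDerivAt_id x).const_mul π)).add_const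
    (π / 2)).congr_deriv (by simp [mul_comm])

theorem tendsto_rOddAngle_atBot : Tendsto rOddAngle atBot (𝓝 0) := by
  have h :=
    (tendsto_gudermannian_atBot.comp (tendsto_id.const_mul_atBot pi_pos)).add_const (π / 2)
  rwa [neg_add_cancel] at h

theorem tendsto_rOddAngle_atTop : Tendsto rOddAngle atTop (𝓝 π) := by
  have h :=
    (tendsto_gudermannian_atTop.comp (tendsto_id.const_mul_atTop pi_pos)).add_const (π / 2)
  rwa [add_halves] at h

/-- The half-winding numbers
`(1/(2πi)) ∫ conj(r_e) r_e' = -1/2` and `(1/(2πi)) ∫ conj(r_o) r_o' = 1/2`. -/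
theorem half_winding_numbers :
    (2 * Real.pi * Complex.I)⁻¹ *
        (∫ x : ℝ, (starRingEnd ℂ) (rEven x) * deriv rEven x) = -(1 / 2) ∧
    (2 * Real.pi * Complex.I)⁻¹ *
        (∫ x : ℝ, (starRingEnd ℂ) (rOdd x) * deriv rOdd x) = 1 / 2 := by
  have hint : Integrable fun x => π * (Real.cosh (π * x))⁻¹ :=
    integrable_deriv_of_nonneg_of_tendsto hasDerivAt_rOddAngle
      (fun x => mul_nonneg pi_pos.le (inv_pos.2 (cosh_pos _)).le)
      tendsto_rOddAngle_atBot tendsto_rOddAngle_atTop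
  rw [funext rEven_eq_exp, funext rOdd_eq_exp]
  beta_reduce
  rw [integral_conj_exp_mul_I_mul_deriv (θ := fun x => -rOddAngle x)
      (fun x => (hasDerivAt_rOddAngle x).neg) hint.neg
      tendsto_rOddAngle_atBot.neg tendsto_rOddAngle_atTop.neg,
    integral_conj_exp_mul_I_mul_deriv hasDerivAt_rOddAngle hint
      tendsto_rOddAngle_atBot tendsto_rOddAngle_atTop]
  have hπ : (π : ℂ) ≠ 0 := ofReal_ne_zero.mpr pi_ne_zero
  constructor <;> push_cast <;> field_simp <;> ring
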